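/- arXiv:1201.2311 — 4 statements merged into one kernel-verified Lean document; each statement's English description precedes it below -/
import Mathlib

section
/- Let b ≥ 2 be an integer, d ≥ 1, and let f(x) = x_1⋯x_d for x ∈ [0,1)^d. Let j ∈ ℕ_{−1}^d, m ∈ D_j, l ∈ B_j, let s = #{i ∈ {1,…,d} : j_i ≠ −1}, and let η_1 < … < η_s enumerate the indices i with j_i ≠ −1. Then the b-adic Haar coefficient of f satisfies μ_{jml}(f) = b^{−2j_{η_1} − … − 2j_{η_s} − s} / ( 2^{d−s} · (e^{2πi l_{η_1}/b} − 1)⋯(e^{2πi l_{η_s}/b} − 1) ). -/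
open MeasureTheory

/-- `e^{2πi x / b}`. -/
noncomputable def eb (b : ℕ) (x : ℝ) : ℂ :=
  Complex.exp (2 * (Real.pi : ℂ) * Complex.I * (x : ℂ) / (b : ℂ))

/-- The one-dimensional `b`-adic Haar function `h_{jml}` for `j ∈ ℕ₀`:
it vanishes outside `I_{jm} = [b^{-j}m, b^{-j}(m+1))` and equals `e^{2πilk/b}` on
`I_{jm}^k = [b^{-j-1}(bm+k), b^{-j-1}(bm+k+1))`, `k = 0,…,b-1`. -/
noncomputable def haarFn (b j m l : ℕ) (x : ℝ) : ℂ :=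
  if (m : ℝ) / (b : ℝ) ^ j ≤ x ∧ x < ((m : ℝ) + 1) / (b : ℝ) ^ j then
    eb b (l * ((⌊(b : ℝ) ^ (j + 1) * x⌋).toNat - b * m))
  else 0

/-- The one-dimensional `b`-adic Haar function with index `j ∈ ℕ_{-1} = {-1,0,1,…}`;
for `j = -1` it is the indicator of `[0,1)`. -/
noncomputable def haarFnZ (b : ℕ) (j : ℤ) (m l : ℕ) (x : ℝ) : ℂ :=
  if j = -1 then (if 0 ≤ x ∧ x < 1 then 1 else 0)
  else haarFn b j.toNat m l x

/-- The `b`-adic Haar coefficient `μ_{jml}(f) = ∫_{[0,1)^d} f(x) h_{jml}(x) dx`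
of a function `f : [0,1)^d → ℂ`, where `h_{jml}(x) = ∏ i, h_{j_i m_i l_i}(x_i)`. -/
noncomputable def haarCoeff (b d : ℕ) (j : Fin d → ℤ) (m l : Fin d → ℕ)
    (f : (Fin d → ℝ) → ℂ) : ℂ :=
  ∫ x in Set.univ.pi (fun _ : Fin d => Set.Ico (0 : ℝ) 1),
    f x * ∏ i, haarFnZ b (j i) (m i) (l i) (x i)

/-! By Fubini the coefficient factorises into one-dimensional integrals `∫₀¹ x h(x) dx`, which
equal `1/2` for `j = -1`. Otherwise `h_{jml} = ω^k` on `I_{jm}^k`, where `ω = e^{2πil/b} ≠ 1` is a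
`b`-th root of unity, so the integral is `∑_{k<b} ω^k ((bm+k+1)² - (bm+k)²) / (2 b^{2j+2})`.
As `∑_k ω^k = 0`, only `b^{-2j-2} ∑_k k ω^k` survives, and `(ω - 1) ∑_k k ω^k = b`. -/

open Finset

section GeomSum

variable {R : Type*} [CommRing R]

lemma sub_one_mul_sum_range_natCast_mul_pow (z : R) (n : ℕ) :
    (z - 1) * ∑ k ∈ range n, (k : R) * z ^ k = (n - 1) * z ^ n - ∑ k ∈ range n, z ^ k + 1 := by
  induction n with
  | zero => simp
  | succ n ih =>
    rw [sum_range_succ, sum_range_succ]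
    push_cast
    linear_combination ih

variable [IsDomain R] {z : R} {n : ℕ}

lemma geom_sum_eq_zero_of_pow_eq_one (hz : z ^ n = 1) (hz1 : z ≠ 1) :
    ∑ k ∈ range n, z ^ k = 0 := by
  have h := mul_geom_sum z n
  rw [hz, sub_self] at h
  exact (mul_eq_zero.1 h).resolve_left (sub_ne_zero.2 hz1)

lemma sub_one_mul_sum_range_natCast_mul_pow_of_pow_eq_one (hz : z ^ n = 1) (hz1 : z ≠ 1) :
    (z - 1) * ∑ k ∈ range n, (k : R) * z ^ k = n := by
  rw [sub_one_mul_sum_range_natCast_mul_pow, hz, geom_sum_eq_zero_of_pow_eq_one hz hz1]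
  ring

end GeomSum

lemma eb_natCast_mul (b l k : ℕ) : eb b ((l * k : ℕ) : ℝ) = eb b l ^ k := by
  simp only [eb, ← Complex.exp_nat_mul]
  congr 1
  push_cast
  ring

lemma eb_pow_self {b : ℕ} (hb : b ≠ 0) (l : ℕ) : eb b l ^ b = 1 := by
  rw [← eb_natCast_mul, mul_comm, eb, Complex.exp_eq_one_iff]
  exact ⟨l, by push_cast; field_simp⟩

lemma eb_ne_one {b l : ℕ} (hl0 : 0 < l) (hlb : l < b) : eb b l ≠ 1 := by
  rw [eb, Ne, Complex.exp_eq_one_iff]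
  rintro ⟨n, hn⟩
  have hb0 : (b : ℂ) ≠ 0 := by norm_cast; omega
  have hl : (l : ℤ) = n * b := by
    have : (l : ℂ) = n * b := by
      field_simp at hn
      rw [Complex.ofReal_natCast] at hn
      linear_combination hn
    exact_mod_cast this
  rcases le_or_gt n 0 with h0 | h0 <;> nlinarith

section HaarFunction

/-- `I_{jm}^k = [haarNode b j m k, haarNode b j m (k + 1))`. -/
noncomputable def haarNode (b j m k : ℕ) : ℝ := ((b : ℝ) * m + k) / (b : ℝ) ^ (j + 1)

variable {b : ℕ} (j m : ℕ)

lemma mem_Ico_haarNode_iff (hb : 0 < b) (k : ℕ) (x : ℝ) :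
    x ∈ Set.Ico (haarNode b j m k) (haarNode b j m (k + 1)) ↔
      ⌊(b : ℝ) ^ (j + 1) * x⌋ = b * m + k := by
  have hP : (0 : ℝ) < (b : ℝ) ^ (j + 1) := by positivity
  rw [Int.floor_eq_iff, Set.mem_Ico, haarNode, haarNode, div_le_iff₀ hP, lt_div_iff₀ hP]
  push_cast
  constructor <;> rintro ⟨h1, h2⟩ <;> constructor <;> linarith

lemma haarInterval_iff_floor (hb : 0 < b) (x : ℝ) :
    ((m : ℝ) / (b : ℝ) ^ j ≤ x ∧ x < ((m : ℝ) + 1) / (b : ℝ) ^ j) ↔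
      (b * m : ℤ) ≤ ⌊(b : ℝ) ^ (j + 1) * x⌋ ∧ ⌊(b : ℝ) ^ (j + 1) * x⌋ < b * m + b := by
  have hb' : (0 : ℝ) < b := by exact_mod_cast hb
  have hP : (0 : ℝ) < (b : ℝ) ^ j := by positivity
  rw [Int.le_floor, Int.floor_lt, div_le_iff₀ hP, lt_div_iff₀ hP, pow_succ]
  push_cast
  constructor <;> rintro ⟨h1, h2⟩ <;> constructor <;> nlinarith

lemma haarNode_le_succ (k : ℕ) : haarNode b j m k ≤ haarNode b j m (k + 1) := by
  unfold haarNode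
  gcongr
  linarith

lemma Ico_haarNode_subset (hm : m < b ^ j) {k : ℕ} (hk : k < b) :
    Set.Ico (haarNode b j m k) (haarNode b j m (k + 1)) ⊆ Set.Ico 0 1 := by
  have hP : (0 : ℝ) < (b : ℝ) ^ (j + 1) := by
    have : 0 < b := by omega
    positivity
  refine Set.Ico_subset_Ico (by unfold haarNode; positivity) ?_
  rw [haarNode, div_le_one hP, pow_succ, Nat.cast_succ]
  have hm' : (m : ℝ) + 1 ≤ (b : ℝ) ^ j := by exact_mod_cast hm
  have hk' : (k : ℝ) + 1 ≤ b := by exact_mod_cast hk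
  nlinarith

lemma haarFn_eq_sum_indicator (hb : 0 < b) (l : ℕ) (x : ℝ) :
    haarFn b j m l x = ∑ k ∈ range b,
      (Set.Ico (haarNode b j m k) (haarNode b j m (k + 1))).indicator (fun _ => eb b l ^ k) x := by
  simp only [Set.indicator_apply, mem_Ico_haarNode_iff j m hb, haarFn,
    haarInterval_iff_floor j m hb]
  set n := ⌊(b : ℝ) ^ (j + 1) * x⌋
  split_ifs with hn
  · obtain ⟨k, hk, hnk⟩ : ∃ k < b, n = b * m + k := ⟨(n - b * m).toNat, by omega, by omega⟩
    have hdigit : (n.toNat : ℝ) - b * m = k := by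
      rw [show n.toNat = b * m + k by omega]
      push_cast
      ring
    rw [hdigit, ← Nat.cast_mul, eb_natCast_mul, sum_eq_single_of_mem k (mem_range.2 hk)]
    · rw [if_pos hnk]
    · intro k' _ hk'
      rw [if_neg (by omega)]
  · exact (sum_eq_zero fun k hk => if_neg (by have := mem_range.1 hk; omega)).symm

lemma integral_Ico_ofReal {a c : ℝ} (h : a ≤ c) :
    ∫ x in Set.Ico a c, (x : ℂ) = (((c ^ 2 - a ^ 2) / 2 : ℝ) : ℂ) := by
  refine (integral_ofReal (f := fun x : ℝ => x)).trans ?_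
  rw [setIntegral_congr_set Ico_ae_eq_Ioc, ← intervalIntegral.integral_of_le h, integral_id]
  rfl

lemma integral_Ico_mul_haarFn_eq_sum (hb : 0 < b) (hm : m < b ^ j) (l : ℕ) :
    ∫ x in Set.Ico (0 : ℝ) 1, (x : ℂ) * haarFn b j m l x =
      ∑ k ∈ range b,
        (((haarNode b j m (k + 1) ^ 2 - haarNode b j m k ^ 2) / 2 : ℝ) : ℂ) * eb b l ^ k := by
  have hsum : ∀ x : ℝ, (x : ℂ) * haarFn b j m l x = ∑ k ∈ range b,
      (Set.Ico (haarNode b j m k) (haarNode b j m (k + 1))).indicator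
        (fun y : ℝ => (y : ℂ) * eb b l ^ k) x := by
    intro x
    rw [haarFn_eq_sum_indicator j m hb, mul_sum]
    exact sum_congr rfl fun k _ => (Set.indicator_mul_right _ _ _).symm
  rw [funext hsum, integral_finsetSum]
  · refine sum_congr rfl fun k hk => ?_
    rw [setIntegral_indicator measurableSet_Ico,
      Set.inter_eq_right.2 (Ico_haarNode_subset j m hm (mem_range.1 hk)), integral_mul_const,
      integral_Ico_ofReal (haarNode_le_succ j m k)]
  · intro k _
    have hcont : Continuous fun y : ℝ => (y : ℂ) * eb b l ^ k := by fun_prop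
    exact (hcont.integrableOn_Icc.mono_set Set.Ico_subset_Icc_self).indicator measurableSet_Ico

lemma integral_Ico_mul_haarFn (hm : m < b ^ j) {l : ℕ} (hl0 : 0 < l) (hlb : l < b) :
    ∫ x in Set.Ico (0 : ℝ) 1, (x : ℂ) * haarFn b j m l x =
      ((b : ℂ) ^ (2 * j + 1))⁻¹ / (eb b l - 1) := by
  set w := eb b l
  have hw : w ^ b = 1 := eb_pow_self (by omega) l
  have hw1 : w ≠ 1 := eb_ne_one hl0 hlb
  have hb0 : (b : ℂ) ≠ 0 := by norm_cast; omega
  have hterm : ∀ k : ℕ,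
      (((haarNode b j m (k + 1) ^ 2 - haarNode b j m k ^ 2) / 2 : ℝ) : ℂ) * w ^ k =
        (k : ℂ) * w ^ k / (b : ℂ) ^ (2 * j + 2) +
          w ^ k * ((2 * b * m + 1) / (2 * (b : ℂ) ^ (2 * j + 2))) := by
    intro k
    simp only [haarNode]
    push_cast
    field_simp
    ring
  rw [integral_Ico_mul_haarFn_eq_sum j m (by omega) hm, sum_congr rfl fun k _ => hterm k,
    sum_add_distrib, ← sum_mul, geom_sum_eq_zero_of_pow_eq_one hw hw1, zero_mul, add_zero,
    ← sum_div, eq_div_iff (sub_ne_zero.2 hw1), div_mul_eq_mul_div, mul_comm _ (w - 1),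
    sub_one_mul_sum_range_natCast_mul_pow_of_pow_eq_one hw hw1]
  field_simp
  ring

lemma integral_Ico_mul_haarFnZ {j : ℤ} {m l : ℕ} (hm : j ≠ -1 → m < b ^ j.toNat)
    (hl : j ≠ -1 → 0 < l ∧ l < b) :
    ∫ x in Set.Ico (0 : ℝ) 1, (x : ℂ) * haarFnZ b j m l x =
      if j ≠ -1 then ((b : ℂ) ^ (2 * j.toNat + 1))⁻¹ / (eb b l - 1) else 2⁻¹ := by
  by_cases hj : j = -1
  · have hindicator : ∀ x ∈ Set.Ico (0 : ℝ) 1, (x : ℂ) * haarFnZ b j m l x = x := fun x hx => by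
      rw [haarFnZ, if_pos hj, if_pos (show 0 ≤ x ∧ x < 1 from hx), mul_one]
    rw [if_neg (not_not_intro hj), setIntegral_congr_fun measurableSet_Ico hindicator,
      integral_Ico_ofReal zero_le_one]
    norm_num
  · simp only [haarFnZ, if_neg hj, if_pos hj]
    exact integral_Ico_mul_haarFn _ _ (hm hj) (hl hj).1 (hl hj).2

end HaarFunction

lemma setIntegral_univ_pi_prod {𝕜 : Type*} [RCLike 𝕜] {ι : Type*} [Fintype ι] {α : ι → Type*}
    [∀ i, MeasurableSpace (α i)] (μ : ∀ i, Measure (α i)) [∀ i, SigmaFinite (μ i)]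
    (s : ∀ i, Set (α i)) (f : ∀ i, α i → 𝕜) :
    ∫ x in Set.univ.pi s, ∏ i, f i (x i) ∂Measure.pi μ = ∏ i, ∫ x in s i, f i x ∂μ i := by
  rw [Measure.restrict_pi_pi, integral_fintype_prod_eq_prod]

lemma haarCoeff_prod (b d : ℕ) (j : Fin d → ℤ) (m l : Fin d → ℕ) (g : Fin d → ℝ → ℂ) :
    haarCoeff b d j m l (fun x => ∏ i, g i (x i)) =
      ∏ i, ∫ t in Set.Ico (0 : ℝ) 1, g i t * haarFnZ b (j i) (m i) (l i) t := by
  rw [haarCoeff, volume_pi, ← setIntegral_univ_pi_prod]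
  simp_rw [prod_mul_distrib]

theorem statement0_general (b d : ℕ) (j : Fin d → ℤ) (m l : Fin d → ℕ)
    (hm : ∀ i, (j i = -1 → m i = 0) ∧ (j i ≠ -1 → m i < b ^ (j i).toNat))
    (hl : ∀ i, (j i = -1 → l i = 1) ∧ (j i ≠ -1 → 1 ≤ l i ∧ l i < b)) :
    haarCoeff b d j m l (fun x => ∏ i, (x i : ℂ)) =
      ((b : ℂ) ^ (2 * (∑ i ∈ Finset.univ.filter (fun i => j i ≠ -1), (j i).toNat)
            + (Finset.univ.filter (fun i => j i ≠ -1)).card))⁻¹ /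
        (2 ^ (d - (Finset.univ.filter (fun i => j i ≠ -1)).card) *
          ∏ i ∈ Finset.univ.filter (fun i => j i ≠ -1), (eb b (l i) - 1)) := by
  have hcard : #(univ.filter fun i => ¬ j i ≠ -1) = d - #(univ.filter fun i => j i ≠ -1) :=
    eq_tsub_of_add_eq <| by
      rw [add_comm, card_filter_add_card_filter_not, card_univ, Fintype.card_fin]
  have hexp : ∑ i ∈ univ.filter (fun i => j i ≠ -1), (2 * (j i).toNat + 1) =
      2 * ∑ i ∈ univ.filter (fun i => j i ≠ -1), (j i).toNat +
        #(univ.filter fun i => j i ≠ -1) := by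
    rw [sum_add_distrib, ← mul_sum, sum_const, smul_eq_mul, mul_one]
  rw [haarCoeff_prod, prod_congr rfl fun i _ => integral_Ico_mul_haarFnZ (hm i).2 (hl i).2,
    prod_ite, prod_const, hcard, prod_div_distrib, prod_inv_distrib, prod_pow_eq_pow_sum, hexp,
    inv_pow]
  field_simp

/-- the `b`-adic Haar coefficients of `f(x) = x_1 ⋯ x_d`. -/
theorem statement0 (b d : ℕ) (hb : 2 ≤ b) (hd : 1 ≤ d)
    (j : Fin d → ℤ) (hj : ∀ i, -1 ≤ j i)
    (m l : Fin d → ℕ)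
    (hm : ∀ i, (j i = -1 → m i = 0) ∧ (j i ≠ -1 → m i < b ^ (j i).toNat))
    (hl : ∀ i, (j i = -1 → l i = 1) ∧ (j i ≠ -1 → 1 ≤ l i ∧ l i < b)) :
    haarCoeff b d j m l (fun x => ∏ i, (x i : ℂ)) =
      ((b : ℂ) ^ (2 * (∑ i ∈ Finset.univ.filter (fun i => j i ≠ -1), (j i).toNat)
            + (Finset.univ.filter (fun i => j i ≠ -1)).card))⁻¹ /
        (2 ^ (d - (Finset.univ.filter (fun i => j i ≠ -1)).card) *
          ∏ i ∈ Finset.univ.filter (fun i => j i ≠ -1), (eb b (l i) - 1)) :=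
  statement0_general b d j m l hm hl
end

section
/- Let b be a prime and d, n positive integers, let 𝒞 and 𝒞^⊥ be mutually dual 𝔽_b-linear subspaces of 𝔽_b^{dn}, and let γ = (γ_1,…,γ_d), λ = (λ_1,…,λ_d) be integer vectors with 0 ≤ λ_i ≤ γ_i ≤ n for all i. Then: #(𝒞 ∩ 𝒱_{γ,λ}) = (#𝒞 / b^{|λ| + σ}) · #(𝒞^⊥ ∩ 𝒱_{γ,λ}^⊥). -/
/-- The dual `𝒞^⊥ = {A : B·A = 0 for all B ∈ 𝒞}` of a set `𝒞 ⊆ 𝔽_b^{dn}` with respect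
to the standard inner product. -/
def dualCode {b d n : ℕ} (C : Set (Fin d → Fin n → ZMod b)) :
    Set (Fin d → Fin n → ZMod b) :=
  {A | ∀ B ∈ C, ∑ i, ∑ k, B i k * A i k = 0}

/-- The set `𝒱_{γ,λ} ⊆ 𝔽_b^{dn}`: all `A = (a_1,…,a_d)` such that (with 1-based
coordinate indices) `a_{ik} = 0` for all `k ≤ λ_i`, and `a_{iγ_i} = 0` when
`λ_i < γ_i`. -/
def Vgl (b d n : ℕ) (γ lam : Fin d → ℕ) : Set (Fin d → Fin n → ZMod b) :=
  {A | ∀ (i : Fin d) (k : Fin n),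
    ((k : ℕ) + 1 ≤ lam i → A i k = 0) ∧
    (lam i < γ i → (k : ℕ) + 1 = γ i → A i k = 0)}

/-- The set `𝒱_{γ,λ}^⊥ ⊆ 𝔽_b^{dn}`: all `A` such that (with 1-based coordinate indices)
`a_{ik} = 0` for all `k` with `λ_i < k < γ_i` and all `k` with `γ_i < k ≤ n`. -/
def VglPerp (b d n : ℕ) (γ lam : Fin d → ℕ) : Set (Fin d → Fin n → ZMod b) :=
  {A | ∀ (i : Fin d) (k : Fin n),
    (lam i < (k : ℕ) + 1 → (k : ℕ) + 1 < γ i → A i k = 0) ∧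
    (γ i < (k : ℕ) + 1 → A i k = 0)}

/-! `𝒱_{γ,λ}` is the coordinate subspace of `𝔽_b^{dn}` cut out by `|λ| + σ` vanishing positions,
and `𝒱_{γ,λ}^⊥` is exactly its dual: the coordinate subspace vanishing at the complementary
positions, of dimension `|λ| + σ`. For subspaces `C`, `W` of a space with a nondegenerate pairing,
`C^⊥ ∩ W^⊥ = (C + W)^⊥`, and counting dimensions gives
`dim (C ∩ W) + dim W^⊥ = dim C + dim (C^⊥ ∩ W^⊥)`; over `𝔽_b` this is the identity of
cardinalities. -/

open Module Finset

namespace LinearMap.BilinForm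

variable {K V : Type*} [Field K] [AddCommGroup V] [Module K V] (B : LinearMap.BilinForm K V)

theorem orthogonal_sup (N L : Submodule K V) :
    B.orthogonal (N ⊔ L) = B.orthogonal N ⊓ B.orthogonal L := by
  refine le_antisymm (le_inf (orthogonal_le le_sup_left) (orthogonal_le le_sup_right)) ?_
  rintro x ⟨hN, hL⟩ z hz
  obtain ⟨y, hy, w, hw, rfl⟩ := Submodule.mem_sup.mp hz
  rw [map_add, LinearMap.add_apply, hN y hy, hL w hw, add_zero]

variable [FiniteDimensional K V] {B}

theorem finrank_add_finrank_orthogonal_of_ker_eq_bot (hB : LinearMap.ker B = ⊥)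
    (W : Submodule K V) : finrank K W + finrank K (B.orthogonal W) = finrank K V := by
  have h := finrank_add_finrank_orthogonal' (B := B) W
  rwa [hB, inf_bot_eq, finrank_bot, add_zero] at h

theorem finrank_inf_add_finrank_orthogonal (hB : LinearMap.ker B = ⊥) (C W : Submodule K V) :
    finrank K ↥(C ⊓ W) + finrank K (B.orthogonal W)
      = finrank K C + finrank K ↥(B.orthogonal C ⊓ B.orthogonal W) := by
  have hW := finrank_add_finrank_orthogonal_of_ker_eq_bot hB W
  have hCW := finrank_add_finrank_orthogonal_of_ker_eq_bot hB (C ⊔ W)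
  have hsup := Submodule.finrank_sup_add_finrank_inf_eq C W
  rw [orthogonal_sup] at hCW
  omega

theorem natCard_inf_mul_natCard_orthogonal [Finite K] (hB : LinearMap.ker B = ⊥)
    (C W : Submodule K V) :
    Nat.card ↥(C ⊓ W) * Nat.card (B.orthogonal W)
      = Nat.card C * Nat.card ↥(B.orthogonal C ⊓ B.orthogonal W) := by
  have hcard (U : Submodule K V) : Nat.card U = Nat.card K ^ finrank K U :=
    natCard_eq_pow_finrank
  rw [hcard, hcard, hcard, hcard, ← pow_add, ← pow_add,
    finrank_inf_add_finrank_orthogonal hB C W]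

end LinearMap.BilinForm

section VanishingSubmodule

variable {ι κ : Type*} (K : Type*) [Semiring K]

def vanishingSubmodule (P : ι → κ → Prop) :
    Submodule K (ι → κ → K) where
  carrier := {A | ∀ i k, P i k → A i k = 0}
  add_mem' hA hB i k h := by simp [hA i k h, hB i k h]
  zero_mem' _ _ _ := rfl
  smul_mem' c A hA i k h := by simp [hA i k h]

variable {K}

theorem mem_vanishingSubmodule {P : ι → κ → Prop} {A : ι → κ → K} :
    A ∈ vanishingSubmodule K P ↔ ∀ i k, P i k → A i k = 0 := Iff.rfl

def vanishingSubmoduleEquiv (P : ι → κ → Prop) [∀ i k, Decidable (P i k)] :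
    vanishingSubmodule K P ≃ ({p : ι × κ // ¬ P p.1 p.2} → K) where
  toFun A p := A.1 p.1.1 p.1.2
  invFun f := ⟨fun i k => if h : P i k then 0 else f ⟨(i, k), h⟩, fun i k h => dif_pos h⟩
  left_inv A := Subtype.ext <| funext₂ fun i k => by
    by_cases h : P i k
    · simp [h, A.2 i k h]
    · simp [h]
  right_inv f := funext fun ⟨_, h⟩ => dif_neg h

theorem natCard_vanishingSubmodule [Finite ι] [Finite κ] (P : ι → κ → Prop) :
    Nat.card (vanishingSubmodule K P) = Nat.card K ^ Nat.card {p : ι × κ // ¬ P p.1 p.2} := by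
  classical
  rw [Nat.card_congr (vanishingSubmoduleEquiv P), Nat.card_fun]

end VanishingSubmodule

section DotForm

variable {ι κ : Type*} [Fintype ι] [Fintype κ] (K : Type*) [CommSemiring K]

def dotForm : LinearMap.BilinForm K (ι → κ → K) :=
  LinearMap.mk₂ K (fun A B => ∑ i, ∑ k, A i k * B i k)
    (fun A A' B => by simp only [Pi.add_apply, add_mul, sum_add_distrib])
    (fun c A B => by simp only [Pi.smul_apply, smul_eq_mul, mul_assoc, mul_sum])
    (fun A B B' => by simp only [Pi.add_apply, mul_add, sum_add_distrib])
    (fun c A B => by simp only [Pi.smul_apply, smul_eq_mul, mul_left_comm, mul_sum])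

variable {K}

theorem dotForm_apply (A B : ι → κ → K) : dotForm K A B = ∑ i, ∑ k, A i k * B i k := rfl

theorem dotForm_comm (A B : ι → κ → K) : dotForm K A B = dotForm K B A := by
  simp only [dotForm_apply, mul_comm]

theorem dotForm_single_right [DecidableEq ι] [DecidableEq κ] (A : ι → κ → K) (i : ι) (k : κ) :
    dotForm K A (Pi.single i (Pi.single k 1)) = A i k := by
  simp [dotForm_apply, Pi.single_apply, ite_apply]

theorem ker_dotForm : LinearMap.ker (dotForm K : LinearMap.BilinForm K (ι → κ → K)) = ⊥ := by
  classical
  refine LinearMap.ker_eq_bot'.mpr fun A hA => funext₂ fun i k => ?_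
  rw [← dotForm_single_right A i k, hA, LinearMap.zero_apply, Pi.zero_apply, Pi.zero_apply]

theorem orthogonal_vanishingSubmodule (P : ι → κ → Prop) :
    (dotForm K).orthogonal (vanishingSubmodule K P) = vanishingSubmodule K fun i k => ¬ P i k := by
  classical
  ext A
  simp only [LinearMap.BilinForm.mem_orthogonal_iff, mem_vanishingSubmodule]
  refine ⟨fun hA i k hPik => ?_, fun hA B hB => ?_⟩
  · rw [← dotForm_single_right A i k, dotForm_comm]
    refine hA _ fun i' k' hP => ?_
    rw [Pi.single_apply]
    split_ifs with hi
    · subst hi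
      exact Pi.single_eq_of_ne (by rintro rfl; exact hPik hP) 1
    · rfl
  · refine sum_eq_zero fun i _ => sum_eq_zero fun k _ => ?_
    by_cases hPik : P i k
    · rw [hB i k hPik, zero_mul]
    · rw [hA i k hPik, mul_zero]

end DotForm

theorem dualCode_eq_orthogonal {b d n : ℕ} (C : Submodule (ZMod b) (Fin d → Fin n → ZMod b)) :
    dualCode (C : Set (Fin d → Fin n → ZMod b)) = (dotForm (ZMod b)).orthogonal C := rfl

def IsVglConstraint {d n : ℕ} (γ lam : Fin d → ℕ) (i : Fin d) (k : Fin n) : Prop :=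
  (k : ℕ) + 1 ≤ lam i ∨ (lam i < γ i ∧ (k : ℕ) + 1 = γ i)

instance {d n : ℕ} (γ lam : Fin d → ℕ) (i : Fin d) (k : Fin n) :
    Decidable (IsVglConstraint γ lam i k) := by unfold IsVglConstraint; infer_instance

theorem card_filter_isVglConstraint {d n : ℕ} {γ lam : Fin d → ℕ} {i : Fin d}
    (hlg : lam i ≤ γ i) (hgn : γ i ≤ n) :
    #{k : Fin n | IsVglConstraint γ lam i k} = lam i + if lam i < γ i then 1 else 0 := by
  have hdisj : Disjoint (univ.filter fun k : Fin n => (k : ℕ) < lam i)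
      (univ.filter fun k : Fin n => lam i < γ i ∧ (k : ℕ) + 1 = γ i) :=
    disjoint_filter.mpr fun k _ hk hk' => by omega
  simp only [IsVglConstraint, Nat.add_one_le_iff, filter_or, card_union_of_disjoint hdisj,
    Fin.card_filter_val_lt, min_eq_right (hlg.trans hgn)]
  congr 1
  split_ifs with hlt
  · exact card_eq_one.mpr ⟨⟨γ i - 1, by omega⟩, by ext k; simp [Fin.ext_iff, hlt]; omega⟩
  · simp [hlt]

theorem natCard_isVglConstraint {d n : ℕ} {γ lam : Fin d → ℕ} (hlg : ∀ i, lam i ≤ γ i)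
    (hgn : ∀ i, γ i ≤ n) :
    Nat.card {p : Fin d × Fin n // IsVglConstraint γ lam p.1 p.2}
      = ∑ i, lam i + #{i | lam i < γ i} := by
  rw [Nat.card_eq_fintype_card, Fintype.card_subtype, card_filter, Fintype.sum_prod_type]
  simp only [card_filter_isVglConstraint (hlg _) (hgn _), sum_add_distrib,
    sum_boole, Nat.cast_id]

theorem vgl_eq_vanishingSubmodule (b d n : ℕ) (γ lam : Fin d → ℕ) :
    Vgl b d n γ lam = (vanishingSubmodule (ZMod b) (IsVglConstraint (n := n) γ lam) : Set _) := by
  ext A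
  simp only [Vgl, IsVglConstraint, Set.mem_ofPred_eq, SetLike.mem_coe, mem_vanishingSubmodule]
  grind

theorem vglPerp_eq_vanishingSubmodule (b d n : ℕ) {γ lam : Fin d → ℕ} (hlg : ∀ i, lam i ≤ γ i) :
    VglPerp b d n γ lam
      = (vanishingSubmodule (ZMod b) fun i (k : Fin n) => ¬ IsVglConstraint γ lam i k : Set _) := by
  ext A
  simp only [VglPerp, IsVglConstraint, Set.mem_ofPred_eq, SetLike.mem_coe, mem_vanishingSubmodule]
  refine forall₂_congr fun i k => ?_
  have := hlg i
  grind

theorem statement14_general (b d n : ℕ) (hb : b.Prime)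
    (𝒞 : Submodule (ZMod b) (Fin d → Fin n → ZMod b))
    (γ lam : Fin d → ℕ) (hlg : ∀ i, lam i ≤ γ i) (hgn : ∀ i, γ i ≤ n) :
    (Nat.card ↥((𝒞 : Set (Fin d → Fin n → ZMod b)) ∩ Vgl b d n γ lam) : ℝ)
      = (Nat.card 𝒞 : ℝ) /
          (b : ℝ) ^ ((∑ i, lam i) + (Finset.univ.filter fun i => lam i < γ i).card) *
        (Nat.card ↥(dualCode (𝒞 : Set (Fin d → Fin n → ZMod b)) ∩ VglPerp b d n γ lam) : ℝ) := by
  have : Fact b.Prime := ⟨hb⟩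
  set V := vanishingSubmodule (ZMod b) (IsVglConstraint (n := n) γ lam)
  have hVperp : VglPerp b d n γ lam = ((dotForm (ZMod b)).orthogonal V : Set _) := by
    rw [orthogonal_vanishingSubmodule, vglPerp_eq_vanishingSubmodule b d n hlg]
  have hcard : Nat.card ((dotForm (ZMod b)).orthogonal V)
      = b ^ ((∑ i, lam i) + (Finset.univ.filter fun i => lam i < γ i).card) := by
    simp only [V, orthogonal_vanishingSubmodule, natCard_vanishingSubmodule, Nat.card_zmod,
      not_not, natCard_isVglConstraint hlg hgn]
  have key := LinearMap.BilinForm.natCard_inf_mul_natCard_orthogonal ker_dotForm 𝒞 V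
  rw [hcard] at key
  rw [vgl_eq_vanishingSubmodule, dualCode_eq_orthogonal, hVperp, ← Submodule.coe_inf,
    ← Submodule.coe_inf, SetLike.coe_sort_coe, SetLike.coe_sort_coe]
  have hb0 : (b : ℝ) ≠ 0 := Nat.cast_ne_zero.mpr hb.ne_zero
  field_simp
  exact_mod_cast key

/-- `#(𝒞 ∩ 𝒱_{γ,λ}) = (#𝒞 / b^{|λ|+σ}) · #(𝒞^⊥ ∩ 𝒱_{γ,λ}^⊥)`, where
`|λ| = λ_1 + … + λ_d` and `σ = #{i : λ_i < γ_i}`. -/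
theorem statement14 (b d n : ℕ) (hb : b.Prime) (hd : 1 ≤ d) (hn : 1 ≤ n)
    (𝒞 : Submodule (ZMod b) (Fin d → Fin n → ZMod b))
    (γ lam : Fin d → ℕ) (hlg : ∀ i, lam i ≤ γ i) (hgn : ∀ i, γ i ≤ n) :
    (Nat.card ↥((𝒞 : Set (Fin d → Fin n → ZMod b)) ∩ Vgl b d n γ lam) : ℝ)
      = (Nat.card 𝒞 : ℝ) /
          (b : ℝ) ^ ((∑ i, lam i) + (Finset.univ.filter fun i => lam i < γ i).card) *
        (Nat.card ↥(dualCode (𝒞 : Set (Fin d → Fin n → ZMod b)) ∩ VglPerp b d n γ lam) : ℝ) :=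
  statement14_general b d n hb 𝒞 γ lam hlg hgn
end

section
/- Let b be a prime and d, n positive integers. Let 𝒞 be an 𝔽_b-linear subspace of 𝔽_b^{dn} of dimension n whose dual space 𝒞^⊥ (of dimension dn − n) satisfies δ_n(𝒞^⊥) ≥ n + 1. Let 0 ≤ λ_i ≤ γ_i ≤ n be integers for 1 ≤ i ≤ d with γ_1 + … + γ_d ≥ n + 1 and λ_1 + … + λ_d + d ≤ n. Then: #{ A = (a_1,…,a_d) ∈ 𝒞^⊥ : v_n(a_i) ≤ γ_i for all i, and a_{ik} = 0 for all i and all k with λ_i < k < γ_i } ≤ b^d. -/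
/-- `v_n(a)`: `0` if `a = 0`, otherwise the largest (1-based) index `ν` with `a_ν ≠ 0`. -/
def vnWeight {b n : ℕ} (a : Fin n → ZMod b) : ℕ :=
  (Finset.univ.filter fun ν : Fin n => a ν ≠ 0).sup (fun ν => (ν : ℕ) + 1)

/-!
The map sending `A` to its coefficients `(a_{i,γ_i})_i` is injective on the set being counted:
two members with the same image differ by a word of `𝒞^⊥` whose `i`-th block vanishes beyond
position `λ_i`, so the difference has weight at most `λ_1 + … + λ_d < n + 1 ≤ δ_n(𝒞^⊥)` and
is therefore zero. Hence the set has at most `b^d` elements.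
-/

lemma vnWeight_le_iff {b n m : ℕ} (a : Fin n → ZMod b) :
    vnWeight a ≤ m ↔ ∀ ν : Fin n, a ν ≠ 0 → (ν : ℕ) + 1 ≤ m := by
  simp [vnWeight, Finset.sup_le_iff]

lemma vnWeight_sub_le_of_eq_on_Ioc {b n l g : ℕ} {a a' : Fin n → ZMod b}
    (ha : vnWeight a ≤ g) (ha' : vnWeight a' ≤ g)
    (heq : ∀ k : Fin n, l < (k : ℕ) + 1 → (k : ℕ) + 1 ≤ g → a k = a' k) :
    vnWeight (a - a') ≤ l := by
  rw [vnWeight_le_iff]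
  intro ν hν
  by_contra! hlν
  apply hν
  by_cases hνg : (ν : ℕ) + 1 ≤ g
  · rw [Pi.sub_apply, heq ν hlν hνg, sub_self]
  · have vanish : ∀ c : Fin n → ZMod b, vnWeight c ≤ g → c ν = 0 := fun c hc => by
      by_contra hcν
      exact hνg ((vnWeight_le_iff c).1 hc ν hcν)
    rw [Pi.sub_apply, vanish a ha, vanish a' ha', sub_self]

lemma sub_mem_dualCode {b d n : ℕ} {C : Set (Fin d → Fin n → ZMod b)}
    {A A' : Fin d → Fin n → ZMod b} (hA : A ∈ dualCode C) (hA' : A' ∈ dualCode C) :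
    A - A' ∈ dualCode C := by
  intro B hB
  simp only [Pi.sub_apply, mul_sub, Finset.sum_sub_distrib, hA B hB, hA' B hB, sub_zero]

lemma eq_of_mem_dualCode_of_sum_vnWeight_sub_lt {b d n δ : ℕ}
    {C : Set (Fin d → Fin n → ZMod b)}
    (hδ : ∀ A ∈ dualCode C, A ≠ 0 → δ ≤ ∑ i, vnWeight (A i))
    {A A' : Fin d → Fin n → ZMod b} (hA : A ∈ dualCode C) (hA' : A' ∈ dualCode C)
    (hlt : ∑ i, vnWeight ((A - A') i) < δ) : A = A' := by
  by_contra hne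
  exact (hδ _ (sub_mem_dualCode hA hA') (sub_ne_zero.mpr hne)).not_gt hlt

theorem statement15_general (b d n : ℕ) (hb : b.Prime)
    (𝒞 : Submodule (ZMod b) (Fin d → Fin n → ZMod b))
    (hδ : ∀ A ∈ dualCode (𝒞 : Set (Fin d → Fin n → ZMod b)), A ≠ 0 →
      n + 1 ≤ ∑ i, vnWeight (A i))
    (γ lam : Fin d → ℕ) (hlam : (∑ i, lam i) + d ≤ n) :
    Nat.card {A : Fin d → Fin n → ZMod b //
        A ∈ dualCode (𝒞 : Set (Fin d → Fin n → ZMod b)) ∧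
        (∀ i, vnWeight (A i) ≤ γ i) ∧
        ∀ (i : Fin d) (k : Fin n), lam i < (k : ℕ) + 1 → (k : ℕ) + 1 < γ i → A i k = 0}
      ≤ b ^ d := by
  have : NeZero b := ⟨hb.ne_zero⟩
  let topCoeffs : (Fin d → Fin n → ZMod b) → Fin d → ZMod b := fun A i =>
    if h : γ i - 1 < n then A i ⟨γ i - 1, h⟩ else 0
  refine (Nat.card_le_card_of_injective (fun A => topCoeffs A.1) ?_).trans ?_
  · rintro ⟨A, hA, hAγ, hAgap⟩ ⟨A', hA', hA'γ, hA'gap⟩ htop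
    have agree : ∀ i (k : Fin n), lam i < (k : ℕ) + 1 → (k : ℕ) + 1 ≤ γ i → A i k = A' i k := by
      intro i k hlk hkγ
      rcases hkγ.lt_or_eq with hkγ | hkγ
      · rw [hAgap i k hlk hkγ, hA'gap i k hlk hkγ]
      · have hk : (⟨γ i - 1, by omega⟩ : Fin n) = k := Fin.ext (by simp; omega)
        simpa [topCoeffs, hk, show γ i - 1 < n by omega] using congrFun htop i
    have hweight : ∑ i, vnWeight ((A - A') i) < n + 1 :=
      calc ∑ i, vnWeight ((A - A') i)
          ≤ ∑ i, lam i := Finset.sum_le_sum fun i _ =>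
            vnWeight_sub_le_of_eq_on_Ioc (hAγ i) (hA'γ i) (agree i)
        _ < n + 1 := by omega
    exact Subtype.ext (eq_of_mem_dualCode_of_sum_vnWeight_sub_lt hδ hA hA' hweight)
  · simp [Nat.card_eq_fintype_card, ZMod.card]

/-- if `𝒞 ⊆ 𝔽_b^{dn}` has dimension `n` and `δ_n(𝒞^⊥) ≥ n + 1`, and
`0 ≤ λ_i ≤ γ_i ≤ n` with `γ_1 + … + γ_d ≥ n + 1` and `λ_1 + … + λ_d + d ≤ n`, then the
number of `A ∈ 𝒞^⊥` with `v_n(a_i) ≤ γ_i` for all `i` and `a_{ik} = 0` for all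
`λ_i < k < γ_i` (1-based indices) is at most `b^d`. -/
theorem statement15 (b d n : ℕ) (hb : b.Prime) (hd : 1 ≤ d) (hn : 1 ≤ n)
    (𝒞 : Submodule (ZMod b) (Fin d → Fin n → ZMod b))
    (hdim : Module.finrank (ZMod b) 𝒞 = n)
    (hδ : ∀ A ∈ dualCode (𝒞 : Set (Fin d → Fin n → ZMod b)), A ≠ 0 →
      n + 1 ≤ ∑ i, vnWeight (A i))
    (γ lam : Fin d → ℕ) (hlg : ∀ i, lam i ≤ γ i) (hgn : ∀ i, γ i ≤ n)
    (hγ : n + 1 ≤ ∑ i, γ i) (hlam : (∑ i, lam i) + d ≤ n) :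
    Nat.card {A : Fin d → Fin n → ZMod b //
        A ∈ dualCode (𝒞 : Set (Fin d → Fin n → ZMod b)) ∧
        (∀ i, vnWeight (A i) ≤ γ i) ∧
        ∀ (i : Fin d) (k : Fin n), lam i < (k : ℕ) + 1 → (k : ℕ) + 1 < γ i → A i k = 0}
      ≤ b ^ d :=
  statement15_general b d n hb 𝒞 hδ γ lam hlam
end

section
/- Let d ≥ 1 and let b ≥ 2d² be a prime. There exists a constant c > 0 (depending only on b and d) such that for every w ∈ ℕ, with n = 2dw and CS_n the Chen–Skriganov point set of N = b^n points, and for every j ∈ ℕ_{−1}^d with j ≠ (−1,…,−1) such that j_i ≥ n for at least one i with j_i ≠ −1, every m ∈ D_j and every l ∈ B_j: |μ_{jml}(D_{CS_n})| ≤ c·b^{−2|j|}, where |j| = Σ_{i=1}^d max(j_i,0). -/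
open MeasureTheory


/-- The map `Φ_n : 𝔽_b^n → [0,1)`, `Φ_n(a) = a_1 b^{-1} + … + a_n b^{-n}`
(digits identified with `{0,…,b−1}`). -/
noncomputable def PhiMap (b : ℕ) {n : ℕ} (a : Fin n → ZMod b) : ℝ :=
  ∑ k : Fin n, ((a k).val : ℝ) / (b : ℝ) ^ ((k : ℕ) + 1)

/-- The Chen–Skriganov code `𝒞_n ⊆ 𝔽_b^{dn}`, `n = 2dw`: the codeword associated with a
polynomial `f ∈ 𝔽_b[z]`, `deg f < n`, has `i`-th block
`a_i(f) = ((∂^{λ−1} f(β_{i,ν}))_{λ=1}^w)_{ν=1}^{2d}` (Hasse derivatives), i.e. the entry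
with (0-based) index `k` of `a_i(f)` is `(∂^{k mod w} f)(β_{i, k / w})`. -/
def csCode (b d w : ℕ) (β : Fin d → ℕ → ZMod b) :
    Set (Fin d → Fin (2 * d * w) → ZMod b) :=
  {A | ∃ f : Polynomial (ZMod b), f.degree < ((2 * d * w : ℕ) : WithBot ℕ) ∧
    ∀ (i : Fin d) (k : Fin (2 * d * w)),
      A i k = Polynomial.eval (β i ((k : ℕ) / w)) (Polynomial.hasseDeriv ((k : ℕ) % w) f)}

/-- The discrepancy function of the Chen–Skriganov point set
`CS_n = Φ_n^d(𝒞_n) ⊆ [0,1)^d` of `N = b^n` points, `n = 2dw`: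
`D(x) = (1/N) #{z ∈ CS_n : z ∈ [0,x)} − x_1⋯x_d`. -/
noncomputable def csDisc (b d w : ℕ) (β : Fin d → ℕ → ZMod b) (x : Fin d → ℝ) : ℝ :=
  (Nat.card {A : Fin d → Fin (2 * d * w) → ZMod b //
      A ∈ csCode b d w β ∧ ∀ i, PhiMap b (A i) ∈ Set.Ico (0 : ℝ) (x i)} : ℝ) /
    (b : ℝ) ^ (2 * d * w) - ∏ i, x i

/-!
Every point `z` of `CS_n` has `z ≥ 0`, so `1_{[0,x)}(z) = ∏ᵢ 1_{(zᵢ,∞)}(xᵢ)`; hence `D(x) h_{jml}(x)`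
is a combination of products `∏ᵢ fᵢ(xᵢ) h_{jᵢmᵢlᵢ}(xᵢ)` and `μ_{jml}(D)` factorises into
one-dimensional integrals.
The coordinates of the points of `CS_n` lie on the grid `b^{-n} ℕ`; as `j_{i₀} ≥ n`, no such
coordinate `z` lies in the interior of `I_{j_{i₀} m_{i₀}}`, so `1_{(z, ∞)}` is a.e. constant there and the
mean-zero Haar function kills the whole counting part. What is left is `∏ᵢ ∫ t h_{jᵢmᵢlᵢ}(t) dt`;
by the mean-zero property again `t` may be replaced by `t` minus the left end of `I_{jm}`, which
bounds each factor by `|I_{jm}|² = b^{-2j}`. Hence `c = 1` works.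
-/

open Set

section HaarFunction

variable {b : ℕ}

variable (b) in
lemma norm_eb (x : ℝ) : ‖eb b x‖ = 1 := by
  simp [eb, Complex.norm_exp]

lemma sum_range_eb_mul_eq_zero {l : ℕ} (hl : 1 ≤ l) (hlb : l < b) :
    ∑ k ∈ Finset.range b, eb b (l * k) = 0 := by
  have hω := Complex.isPrimitiveRoot_exp b (by omega)
  set ζ := Complex.exp (2 * Real.pi * Complex.I / b) ^ l
  have heb : ∀ k : ℕ, eb b (l * k) = ζ ^ k := fun k => by
    rw [← pow_mul, ← Complex.exp_nat_mul, eb]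
    push_cast
    ring_nf
  have hζ : ζ ≠ 1 := hω.pow_ne_one_of_pos_of_lt (by omega) hlb
  have hζb : ζ ^ b = 1 := by rw [pow_right_comm, hω.pow_eq_one, one_pow]
  simp_rw [heb, geom_sum_eq hζ, hζb, sub_self, zero_div]

variable (b) in
lemma measurable_haarFn (j m l : ℕ) : Measurable (haarFn b j m l) := by
  refine Measurable.ite measurableSet_Ico ?_ measurable_const
  unfold eb
  have : Measurable fun x : ℝ => ((⌊(b : ℝ) ^ (j + 1) * x⌋.toNat : ℕ) : ℝ) :=
    (measurable_from_top.comp measurable_from_top).comp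
      (Int.measurable_floor.comp (measurable_const_mul _))
  fun_prop

variable (b) in
lemma norm_haarFn_le_one (j m l : ℕ) (x : ℝ) : ‖haarFn b j m l x‖ ≤ 1 := by
  unfold haarFn
  split
  · rw [norm_eb]
  · simp

lemma haarFn_of_notMem {j m l : ℕ} {x : ℝ}
    (hx : x ∉ Ico ((m : ℝ) / (b : ℝ) ^ j) (((m : ℝ) + 1) / (b : ℝ) ^ j)) :
    haarFn b j m l x = 0 :=
  if_neg hx

lemma integrableOn_haarFn {j m l : ℕ} {s : Set ℝ} (hs : volume s ≠ ⊤) :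
    IntegrableOn (haarFn b j m l) s :=
  Measure.integrableOn_of_bounded hs (measurable_haarFn b j m l).aestronglyMeasurable
    (ae_of_all _ (norm_haarFn_le_one b j m l))

lemma haarFn_eq_eb_of_mem {j m l k : ℕ} (hk : k < b) {x : ℝ}
    (hx : x ∈ Ico (((b : ℝ) * m + k) / (b : ℝ) ^ (j + 1))
      (((b : ℝ) * m + k + 1) / (b : ℝ) ^ (j + 1))) :
    haarFn b j m l x = eb b (l * k) := by
  have hb : (0 : ℝ) < b := by exact_mod_cast (show 0 < b by omega)
  have hbj : (0 : ℝ) < (b : ℝ) ^ j := by positivity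
  have hk' : (k : ℝ) + 1 ≤ b := by exact_mod_cast hk
  have hscale : (b : ℝ) ^ (j + 1) * x = b * ((b : ℝ) ^ j * x) := by ring
  rw [mem_Ico, div_le_iff₀ (by positivity), lt_div_iff₀ (by positivity), mul_comm x,
    hscale] at hx
  have hmem : (m : ℝ) / (b : ℝ) ^ j ≤ x ∧ x < ((m : ℝ) + 1) / (b : ℝ) ^ j := by
    rw [div_le_iff₀ hbj, lt_div_iff₀ hbj, mul_comm x]
    constructor <;> nlinarith
  have hfloor : ⌊(b : ℝ) ^ (j + 1) * x⌋ = ((b * m + k : ℕ) : ℤ) := by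
    rw [Int.floor_eq_iff, hscale]
    push_cast
    constructor <;> linarith
  rw [haarFn, if_pos hmem, hfloor, Int.toNat_natCast]
  push_cast
  ring_nf

lemma setIntegral_haarFn_eq_zero {j m l : ℕ} (hl : 1 ≤ l) (hlb : l < b) :
    ∫ x in Ico ((m : ℝ) / (b : ℝ) ^ j) (((m : ℝ) + 1) / (b : ℝ) ^ j), haarFn b j m l x = 0 := by
  have hb : (0 : ℝ) < b := by exact_mod_cast (show 0 < b by omega)
  set a : ℕ → ℝ := fun k => ((b : ℝ) * m + k) / (b : ℝ) ^ (j + 1) with ha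
  have hmono : Monotone a := fun k k' hkk' => by
    simp only [ha]
    gcongr
  have hIco : ∀ {k k'} (f : ℝ → ℂ), k ≤ k' →
      ∫ x in a k..a k', f x = ∫ x in Ico (a k) (a k'), f x := fun f hkk' => by
    rw [intervalIntegral.integral_of_le (hmono hkk'), integral_Ioc_eq_integral_Ioo,
      integral_Ico_eq_integral_Ioo]
  have hpiece : ∀ k < b,
      ∫ x in a k..a (k + 1), haarFn b j m l x = ((b : ℝ) ^ (j + 1))⁻¹ • eb b (l * k) := by
    intro k hk
    rw [hIco _ k.le_succ, setIntegral_congr_fun measurableSet_Ico fun x hx =>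
        haarFn_eq_eb_of_mem hk (by simpa [ha, add_assoc] using hx), ← hIco _ k.le_succ,
      intervalIntegral.integral_const]
    congr 1
    simp only [ha]
    push_cast
    field_simp
    ring
  have hends : Ico ((m : ℝ) / (b : ℝ) ^ j) (((m : ℝ) + 1) / (b : ℝ) ^ j) = Ico (a 0) (a b) := by
    simp only [ha, pow_succ, Nat.cast_zero, add_zero]
    congr 1 <;> field_simp
  rw [hends, ← hIco _ (Nat.zero_le b), ← intervalIntegral.sum_integral_adjacent_intervals
      fun k _ => (integrableOn_haarFn isCompact_uIcc.measure_lt_top.ne).intervalIntegrable,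
    Finset.sum_congr rfl fun k hk => hpiece k (Finset.mem_range.1 hk), ← Finset.smul_sum,
    sum_range_eb_mul_eq_zero hl hlb, smul_zero]

lemma setIntegral_indicator_Ioi_mul_haarFn_eq_zero {j m l : ℕ} (hl : 1 ≤ l) (hlb : l < b)
    (s : ℕ) :
    ∫ t in Ico ((m : ℝ) / (b : ℝ) ^ j) (((m : ℝ) + 1) / (b : ℝ) ^ j),
      (Ioi ((s : ℝ) / (b : ℝ) ^ j)).indicator 1 t * haarFn b j m l t = 0 := by
  have hbj : (0 : ℝ) < (b : ℝ) ^ j := by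
    have : (0 : ℝ) < b := by exact_mod_cast (show 0 < b by omega)
    positivity
  simp_rw [← indicator_mul_left, Pi.one_apply, one_mul]
  rw [setIntegral_indicator measurableSet_Ioi]
  rcases le_or_gt s m with hsm | hms
  · have hIci : Ico ((m : ℝ) / (b : ℝ) ^ j) (((m : ℝ) + 1) / (b : ℝ) ^ j) ∩
        Ici ((s : ℝ) / (b : ℝ) ^ j) = Ico ((m : ℝ) / (b : ℝ) ^ j) (((m : ℝ) + 1) / (b : ℝ) ^ j) :=
      inter_eq_left.2 fun t ht => le_trans (by gcongr) ht.1
    rw [setIntegral_congr_set ((ae_eq_refl _).inter Ioi_ae_eq_Ici), hIci,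
      setIntegral_haarFn_eq_zero hl hlb]
  · have hempty : Ico ((m : ℝ) / (b : ℝ) ^ j) (((m : ℝ) + 1) / (b : ℝ) ^ j) ∩
        Ioi ((s : ℝ) / (b : ℝ) ^ j) = ∅ := by
      refine eq_empty_of_forall_notMem fun t ht => ?_
      have : ((m : ℝ) + 1) / (b : ℝ) ^ j ≤ s / (b : ℝ) ^ j := by
        gcongr
        exact_mod_cast hms
      linarith [ht.1.2, ht.2.out]
    rw [hempty, Measure.restrict_empty, integral_zero_measure]

lemma norm_setIntegral_ofReal_mul_haarFn_le {j m l : ℕ} (hl : 1 ≤ l) (hlb : l < b) :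
    ‖∫ t in Ico ((m : ℝ) / (b : ℝ) ^ j) (((m : ℝ) + 1) / (b : ℝ) ^ j),
      (t : ℂ) * haarFn b j m l t‖ ≤ ((b : ℝ) ^ (2 * j))⁻¹ := by
  have hbj : (0 : ℝ) < (b : ℝ) ^ j := by
    have : (0 : ℝ) < b := by exact_mod_cast (show 0 < b by omega)
    positivity
  set c : ℝ := (m : ℝ) / (b : ℝ) ^ j
  set I := Ico c (((m : ℝ) + 1) / (b : ℝ) ^ j)
  have hvol : volume I = ENNReal.ofReal ((b : ℝ) ^ j)⁻¹ := by
    rw [Real.volume_Ico]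
    congr 1
    simp only [c]
    field_simp
    ring
  have hI : IntegrableOn (haarFn b j m l) I := integrableOn_haarFn (by simp [hvol])
  have hdist : ∀ t ∈ I, ‖(t : ℂ) - c‖ ≤ ((b : ℝ) ^ j)⁻¹ := fun t ht => by
    rw [← Complex.ofReal_sub, Complex.norm_real, Real.norm_eq_abs,
      abs_of_nonneg (sub_nonneg.2 ht.1)]
    have : ((m : ℝ) + 1) / (b : ℝ) ^ j - c = ((b : ℝ) ^ j)⁻¹ := by
      simp only [c]
      field_simp
      ring
    linarith [ht.2]
  have hcentred : IntegrableOn (fun t : ℝ => ((t : ℂ) - c) * haarFn b j m l t) I :=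
    Integrable.bdd_mul hI (by fun_prop) ((ae_restrict_iff' measurableSet_Ico).2 (ae_of_all _ hdist))
  -- the Haar function has mean zero on `I`, so `t` may be replaced by `t - c`
  have hshift : ∫ t in I, (t : ℂ) * haarFn b j m l t =
      ∫ t in I, ((t : ℂ) - c) * haarFn b j m l t := by
    have hmean : ∫ t in I, (c : ℂ) * haarFn b j m l t = 0 := by
      rw [integral_const_mul, setIntegral_haarFn_eq_zero hl hlb, mul_zero]
    rw [← add_zero (∫ t : ℝ in I, ((t : ℂ) - c) * haarFn b j m l t), ← hmean,
      ← integral_add hcentred (hI.const_mul _)]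
    simp_rw [← add_mul, sub_add_cancel]
  calc ‖∫ t in I, (t : ℂ) * haarFn b j m l t‖
      ≤ ((b : ℝ) ^ j)⁻¹ * volume.real I := by
        rw [hshift]
        refine norm_setIntegral_le_of_norm_le_const (by simp [hvol]) fun t ht => ?_
        rw [norm_mul, ← mul_one ((b : ℝ) ^ j)⁻¹]
        exact mul_le_mul (hdist t ht) (norm_haarFn_le_one b j m l t) (norm_nonneg _)
          (by positivity)
    _ = ((b : ℝ) ^ (2 * j))⁻¹ := by
        rw [measureReal_def, hvol, ENNReal.toReal_ofReal (by positivity), ← mul_inv, ← pow_add,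
          two_mul]

lemma setIntegral_Ico_zero_one_mul_haarFn {j m l : ℕ} (hm : m < b ^ j) (f : ℝ → ℂ) :
    ∫ t in Ico (0 : ℝ) 1, f t * haarFn b j m l t =
      ∫ t in Ico ((m : ℝ) / (b : ℝ) ^ j) (((m : ℝ) + 1) / (b : ℝ) ^ j), f t * haarFn b j m l t := by
  have hbj : (0 : ℝ) < (b : ℝ) ^ j := by exact_mod_cast (show 0 < b ^ j by omega)
  refine setIntegral_eq_of_subset_of_forall_sdiff_eq_zero measurableSet_Ico
    (fun t ht => ⟨le_trans (by positivity) ht.1, ht.2.trans_le ?_⟩) fun t ht => ?_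
  · rw [div_le_one hbj]
    exact_mod_cast hm
  · rw [haarFn_of_notMem ht.2, mul_zero]

lemma haarFnZ_of_ne {j : ℤ} (hj : j ≠ -1) (m l : ℕ) : haarFnZ b j m l = haarFn b j.toNat m l :=
  funext fun _ => if_neg hj

variable (b) in
lemma measurable_haarFnZ (j : ℤ) (m l : ℕ) : Measurable (haarFnZ b j m l) :=
  Measurable.ite (.const _) (Measurable.ite measurableSet_Ico measurable_const measurable_const)
    (measurable_haarFn b _ m l)

variable (b) in
lemma norm_haarFnZ_le_one (j : ℤ) (m l : ℕ) (x : ℝ) : ‖haarFnZ b j m l x‖ ≤ 1 := by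
  rcases eq_or_ne j (-1) with hj | hj
  · simp only [haarFnZ, if_pos hj]
    split <;> simp
  · rw [haarFnZ_of_ne hj]
    exact norm_haarFn_le_one b _ m l x

lemma IntegrableOn.mul_haarFnZ {f : ℝ → ℂ} {s : Set ℝ} (hf : IntegrableOn f s) (j : ℤ)
    (m l : ℕ) : IntegrableOn (fun t => f t * haarFnZ b j m l t) s :=
  Integrable.mul_bdd hf (measurable_haarFnZ b j m l).aestronglyMeasurable
    (ae_of_all _ (norm_haarFnZ_le_one b j m l))

lemma setIntegral_indicator_Ioi_mul_haarFnZ_eq_zero {j : ℤ} {m l n : ℕ} (hj : j ≠ -1)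
    (hm : m < b ^ j.toNat) (hl : 1 ≤ l) (hlb : l < b) (hn : n ≤ j.toNat) (T : ℕ) :
    ∫ t in Ico (0 : ℝ) 1, (Ioi ((T : ℝ) / (b : ℝ) ^ n)).indicator 1 t * haarFnZ b j m l t = 0 := by
  have hb : (b : ℝ) ≠ 0 := by exact_mod_cast (show b ≠ 0 by omega)
  have hgrid : (T : ℝ) / (b : ℝ) ^ n = ((T * b ^ (j.toNat - n) : ℕ) : ℝ) / (b : ℝ) ^ j.toNat := by
    obtain ⟨k, hk⟩ := Nat.exists_eq_add_of_le hn
    rw [hk, Nat.add_sub_cancel_left, pow_add]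
    push_cast
    field_simp
  rw [haarFnZ_of_ne hj, hgrid, setIntegral_Ico_zero_one_mul_haarFn hm,
    setIntegral_indicator_Ioi_mul_haarFn_eq_zero hl hlb]

lemma norm_setIntegral_ofReal_mul_haarFnZ_le {j : ℤ} {m l : ℕ} (hm : j ≠ -1 → m < b ^ j.toNat)
    (hl : j ≠ -1 → 1 ≤ l ∧ l < b) :
    ‖∫ t in Ico (0 : ℝ) 1, (t : ℂ) * haarFnZ b j m l t‖ ≤ ((b : ℝ) ^ (2 * j.toNat))⁻¹ := by
  rcases eq_or_ne j (-1) with rfl | hj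
  · calc ‖∫ t in Ico (0 : ℝ) 1, (t : ℂ) * haarFnZ b (-1) m l t‖
          ≤ 1 * volume.real (Ico (0 : ℝ) 1) :=
          norm_setIntegral_le_of_norm_le_const measure_Ico_lt_top fun t ht => by
            rw [norm_mul, Complex.norm_real, Real.norm_eq_abs, abs_of_nonneg ht.1]
            exact mul_le_one₀ ht.2.le (norm_nonneg _) (norm_haarFnZ_le_one b _ m l t)
      _ = ((b : ℝ) ^ (2 * (-1 : ℤ).toNat))⁻¹ := by simp
  · obtain ⟨hl, hlb⟩ := hl hj
    rw [haarFnZ_of_ne hj, setIntegral_Ico_zero_one_mul_haarFn (hm hj)]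
    exact norm_setIntegral_ofReal_mul_haarFn_le hl hlb

end HaarFunction

section Product

variable {ι 𝕜 : Type*} [Fintype ι] [RCLike 𝕜]

lemma setIntegral_univ_pi_prod_s18 (s : ι → Set ℝ) (f : ι → ℝ → 𝕜) :
    ∫ x in univ.pi s, ∏ i, f i (x i) = ∏ i, ∫ t in s i, f i t := by
  rw [volume_pi, Measure.restrict_pi_pi, integral_fintype_prod_eq_prod]

lemma integrableOn_univ_pi_prod {s : ι → Set ℝ} {f : ι → ℝ → 𝕜}
    (hf : ∀ i, IntegrableOn (f i) (s i)) :
    IntegrableOn (fun x => ∏ i, f i (x i)) (univ.pi s) := by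
  rw [IntegrableOn, volume_pi, Measure.restrict_pi_pi]
  exact Integrable.fintype_prod hf

end Product

section ChenSkriganov

lemma PhiMap_nonneg (b : ℕ) {n : ℕ} (a : Fin n → ZMod b) : 0 ≤ PhiMap b a :=
  Finset.sum_nonneg fun _ _ => by positivity

lemma exists_PhiMap_eq_natCast_div {b : ℕ} (hb : b ≠ 0) {n : ℕ} (a : Fin n → ZMod b) :
    ∃ T : ℕ, PhiMap b a = T / (b : ℝ) ^ n := by
  refine ⟨∑ k : Fin n, (a k).val * b ^ (n - 1 - k), ?_⟩
  have hb' : (b : ℝ) ≠ 0 := by exact_mod_cast hb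
  rw [PhiMap, Nat.cast_sum, Finset.sum_div]
  refine Finset.sum_congr rfl fun k _ => ?_
  rw [show (b : ℝ) ^ n = (b : ℝ) ^ (n - 1 - k) * (b : ℝ) ^ ((k : ℕ) + 1) by
    rw [← pow_add]
    congr 1
    omega]
  push_cast
  field_simp

open scoped Classical in
lemma csDisc_eq (b d w : ℕ) [NeZero b] (β : Fin d → ℕ → ZMod b) (x : Fin d → ℝ) :
    (csDisc b d w β x : ℂ) =
      (∑ A ∈ Finset.univ.filter (· ∈ csCode b d w β),
          ∏ i, (Ioi (PhiMap b (A i))).indicator 1 (x i)) / (b : ℂ) ^ (2 * d * w) -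
        ∏ i, (x i : ℂ) := by
  rw [csDisc, Nat.card_eq_fintype_card, Fintype.card_subtype, Finset.card_filter,
    Finset.sum_filter]
  push_cast
  congr 2
  refine Finset.sum_congr rfl fun A _ => ?_
  simp only [indicator_apply, mem_Ioi, mem_Ico, Pi.one_apply, Finset.prod_boole,
    Finset.mem_univ, true_implies, PhiMap_nonneg, true_and]
  split_ifs <;> simp_all

open scoped Classical in
lemma haarCoeff_csDisc {b d : ℕ} [NeZero b] (j : Fin d → ℤ) (m l : Fin d → ℕ) (w : ℕ)
    (β : Fin d → ℕ → ZMod b) :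
    haarCoeff b d j m l (fun x => (csDisc b d w β x : ℂ)) =
      (∑ A ∈ Finset.univ.filter (· ∈ csCode b d w β), ∏ i, ∫ t in Ico (0 : ℝ) 1,
          (Ioi (PhiMap b (A i))).indicator 1 t * haarFnZ b (j i) (m i) (l i) t) /
        (b : ℂ) ^ (2 * d * w) -
      ∏ i, ∫ t in Ico (0 : ℝ) 1, (t : ℂ) * haarFnZ b (j i) (m i) (l i) t := by
  have hcount : ∀ A ∈ Finset.univ.filter (· ∈ csCode b d w β),
      IntegrableOn (fun x => ∏ i,
        (Ioi (PhiMap b (A i))).indicator 1 (x i) * haarFnZ b (j i) (m i) (l i) (x i))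
        (univ.pi fun _ => Ico (0 : ℝ) 1) := fun A _ =>
    integrableOn_univ_pi_prod fun i =>
      IntegrableOn.mul_haarFnZ ((integrableOn_const (s := Ico (0 : ℝ) 1) (C := (1 : ℂ))
        measure_Ico_lt_top.ne).indicator measurableSet_Ioi) _ _ _
  have hvol : IntegrableOn (fun x => ∏ i, (x i : ℂ) * haarFnZ b (j i) (m i) (l i) (x i))
      (univ.pi fun _ => Ico (0 : ℝ) 1) :=
    integrableOn_univ_pi_prod fun i =>
      IntegrableOn.mul_haarFnZ
        (Complex.continuous_ofReal.integrableOn_Icc.mono_set Ico_subset_Icc_self) _ _ _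
  simp_rw [haarCoeff, csDisc_eq, sub_mul, div_mul_eq_mul_div, Finset.sum_mul,
    ← Finset.prod_mul_distrib]
  rw [integral_sub ((integrable_finsetSum _ hcount).div_const _) hvol, integral_div,
    integral_finsetSum _ hcount]
  congr 2
  · exact Finset.sum_congr rfl fun A _ => setIntegral_univ_pi_prod_s18 _ fun i t =>
      (Ioi (PhiMap b (A i))).indicator 1 t * haarFnZ b (j i) (m i) (l i) t
  · exact setIntegral_univ_pi_prod_s18 _ fun i t => (t : ℂ) * haarFnZ b (j i) (m i) (l i) t

end ChenSkriganov

theorem statement18_general (b d : ℕ)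
    (β : Fin d → ℕ → ZMod b) :
    ∃ c > (0 : ℝ), ∀ w : ℕ, 1 ≤ w →
      ∀ j : Fin d → ℤ, (∀ i, -1 ≤ j i) → j ≠ (fun _ => -1) →
        (∃ i, j i ≠ -1 ∧ (2 * d * w : ℤ) ≤ j i) →
        ∀ m : Fin d → ℕ,
          (∀ i, (j i = -1 → m i = 0) ∧ (j i ≠ -1 → m i < b ^ (j i).toNat)) →
        ∀ l : Fin d → ℕ,
          (∀ i, (j i = -1 → l i = 1) ∧ (j i ≠ -1 → 1 ≤ l i ∧ l i < b)) →
        ‖haarCoeff b d j m l (fun x => (csDisc b d w β x : ℂ))‖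
          ≤ c * ((b : ℝ) ^ (2 * (∑ i, (j i).toNat)))⁻¹ := by
  refine ⟨1, one_pos, fun w _ j _ _ ⟨i₀, hi₀, hn⟩ m hm l hl => ?_⟩
  obtain ⟨hl₀, hlb₀⟩ := (hl i₀).2 hi₀
  have : NeZero b := ⟨by omega⟩
  have hcount (A : Fin d → Fin (2 * d * w) → ZMod b) : ∏ i, ∫ t in Ico (0 : ℝ) 1,
      (Ioi (PhiMap b (A i))).indicator 1 t * haarFnZ b (j i) (m i) (l i) t = 0 := by
    obtain ⟨T, hT⟩ := exists_PhiMap_eq_natCast_div (by omega) (A i₀)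
    refine Finset.prod_eq_zero (Finset.mem_univ i₀) ?_
    rw [hT]
    exact setIntegral_indicator_Ioi_mul_haarFnZ_eq_zero hi₀ ((hm i₀).2 hi₀) hl₀ hlb₀
      (by zify; omega) T
  rw [haarCoeff_csDisc, Finset.sum_eq_zero fun A _ => hcount A, zero_div, zero_sub, norm_neg,
    norm_prod, one_mul, Finset.mul_sum, ← Finset.prod_pow_eq_pow_sum, ← Finset.prod_inv_distrib]
  exact Finset.prod_le_prod (fun _ _ => norm_nonneg _) fun i _ =>
    norm_setIntegral_ofReal_mul_haarFnZ_le (hm i).2 (hl i).2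

/-- Haar coefficients of the discrepancy function of the Chen–Skriganov
point sets for `j ≠ (−1,…,−1)` with `j_i ≥ n` for at least one `i`:
`|μ_{jml}| ≤ c b^{−2|j|}`. -/
theorem statement18 (b d : ℕ) (hd : 1 ≤ d) (hb : b.Prime) (hbd : 2 * d ^ 2 ≤ b)
    (β : Fin d → ℕ → ZMod b)
    (hβ : ∀ i₁ ν₁ i₂ ν₂, ν₁ < 2 * d → ν₂ < 2 * d → β i₁ ν₁ = β i₂ ν₂ →
      i₁ = i₂ ∧ ν₁ = ν₂) :
    ∃ c > (0 : ℝ), ∀ w : ℕ, 1 ≤ w →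
      ∀ j : Fin d → ℤ, (∀ i, -1 ≤ j i) → j ≠ (fun _ => -1) →
        (∃ i, j i ≠ -1 ∧ (2 * d * w : ℤ) ≤ j i) →
        ∀ m : Fin d → ℕ,
          (∀ i, (j i = -1 → m i = 0) ∧ (j i ≠ -1 → m i < b ^ (j i).toNat)) →
        ∀ l : Fin d → ℕ,
          (∀ i, (j i = -1 → l i = 1) ∧ (j i ≠ -1 → 1 ≤ l i ∧ l i < b)) →
        ‖haarCoeff b d j m l (fun x => (csDisc b d w β x : ℂ))‖
          ≤ c * ((b : ℝ) ^ (2 * (∑ i, (j i).toNat)))⁻¹ :=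
  statement18_general b d β
end
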